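/- In a unital category, if (f, g) is a jointly strongly epimorphic cospan over Z and (f', g') is a jointly strongly epimorphic cospan over Z', then the product cospan (f × f', g × g') over Z × Z' is jointly strongly epimorphic. -/

import Mathlib

/-!
Let `m : M ⟶ Z ⨯ Z'` be a monomorphism through which both product legs factor. Pulling `m` back
along `⟨1, 0⟩ : Z ⟶ Z ⨯ Z'` gives a monomorphism into `Z` through which `f` and `g` factor, so it
is an isomorphism and `⟨1, 0⟩` factors through `m`; likewise `⟨0, 1⟩ : Z' ⟶ Z ⨯ Z'`. Unitality
then makes `m` an isomorphism.
-/

open CategoryTheory CategoryTheory.Limits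

universe w₂ w v u

namespace AlgCoh

variable {C : Type u} [Category.{v} C]

/-- A cospan `(f, g)` over `Z` is jointly strongly epimorphic: every monomorphism
into `Z` through which both legs factor is an isomorphism. -/
def JointlyStronglyEpi {X Y Z : C} (f : X ⟶ Z) (g : Y ⟶ Z) : Prop :=
  ∀ ⦃M : C⦄ (m : M ⟶ Z), Mono m → ∀ (f' : X ⟶ M) (g' : Y ⟶ M),
    f' ≫ m = f → g' ≫ m = g → IsIso m

theorem JointlyStronglyEpi.exists_lift_of_mono {X Y Z W M : C} {f : X ⟶ Z} {g : Y ⟶ Z}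
    (h : JointlyStronglyEpi f g) (m : M ⟶ W) [Mono m] (k : Z ⟶ W) [HasPullback m k]
    (a : X ⟶ M) (b : Y ⟶ M) (ha : a ≫ m = f ≫ k) (hb : b ≫ m = g ≫ k) :
    ∃ t : Z ⟶ M, t ≫ m = k := by
  have : IsIso (pullback.snd m k) :=
    h _ inferInstance (pullback.lift a f ha) (pullback.lift b g hb)
      (pullback.lift_snd _ _ _) (pullback.lift_snd _ _ _)
  exact ⟨inv (pullback.snd m k) ≫ pullback.fst m k, by simp [pullback.condition]⟩

theorem jointlyStronglyEpi_prod_map_general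
    [HasZeroMorphisms C] [HasFiniteLimits C]
    (hU : ∀ X Y : C,
      JointlyStronglyEpi (prod.lift (𝟙 X) (0 : X ⟶ Y)) (prod.lift (0 : Y ⟶ X) (𝟙 Y)))
    {A B Z A' B' Z' : C} {f : A ⟶ Z} {g : B ⟶ Z} {f' : A' ⟶ Z'} {g' : B' ⟶ Z'}
    (h : JointlyStronglyEpi f g) (h' : JointlyStronglyEpi f' g') :
    JointlyStronglyEpi (prod.map f f') (prod.map g g') := by
  intro M m hm u v hu hv
  obtain ⟨t, ht⟩ := h.exists_lift_of_mono m (prod.lift (𝟙 Z) 0)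
    (prod.lift (𝟙 A) 0 ≫ u) (prod.lift (𝟙 B) 0 ≫ v) (by simp [hu]) (by simp [hv])
  obtain ⟨t', ht'⟩ := h'.exists_lift_of_mono m (prod.lift 0 (𝟙 Z'))
    (prod.lift 0 (𝟙 A') ≫ u) (prod.lift 0 (𝟙 B') ≫ v) (by simp [hu]) (by simp [hv])
  exact hU Z Z' m hm t t' ht ht'

/-- In a unital category, the product of two jointly strongly epimorphic cospans
is jointly strongly epimorphic. -/
theorem jointlyStronglyEpi_prod_map
    [HasZeroObject C] [HasZeroMorphisms C] [HasFiniteLimits C]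
    (hU : ∀ X Y : C,
      JointlyStronglyEpi (prod.lift (𝟙 X) (0 : X ⟶ Y)) (prod.lift (0 : Y ⟶ X) (𝟙 Y)))
    {A B Z A' B' Z' : C} {f : A ⟶ Z} {g : B ⟶ Z} {f' : A' ⟶ Z'} {g' : B' ⟶ Z'}
    (h : JointlyStronglyEpi f g) (h' : JointlyStronglyEpi f' g') :
    JointlyStronglyEpi (prod.map f f') (prod.map g g') :=
  jointlyStronglyEpi_prod_map_general hU h h'

end AlgCoh
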